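/- Let 𝔽 = ℝ. For every 0 ≤ d ≤ n_min, the set P^gcd_d of N-tuples of real polynomials (with degree bounds n) having a common divisor of degree at least d, viewed as a subset of the Euclidean space ℝ^{n_1+1} × ⋯ × ℝ^{n_N+1} of coefficient-vector tuples, is a closed set. -/

import Mathlib

/-!
Normalising the common factor `h` to the unit sphere, `P^cd_{d'}` is the image of
`sphere × cofactors` under `(h, g) ↦ g·h`, which is linear in `g` and injective for `h ≠ 0`.
Compactness of the sphere turns injectivity into a uniform bound `c‖g‖ ≤ ‖g·h‖`, so this map is
proper and its image is closed; `P^gcd_d` is the finite union of these sets over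
`d ≤ d' ≤ n_min`.
-/

open Polynomial Set

/-- The polynomial with coefficient vector `v` (coefficient of `X^i` is `v i`). -/
noncomputable def toPoly {m : ℕ} (v : Fin m → ℝ) : ℝ[X] :=
  ∑ i, C (v i) * X ^ (i : ℕ)

section ProperImage

variable {E F G : Type*} [TopologicalSpace E]
  [NormedAddCommGroup F] [NormedSpace ℝ F] [ProperSpace F]
  [NormedAddCommGroup G] [NormedSpace ℝ G]
  {K : Set E} {B : E → F →ₗ[ℝ] G}

theorem exists_pos_mul_norm_le_norm_of_injective (hK : IsCompact K)
    (hB : Continuous fun x : E × F => B x.1 x.2) (hinj : ∀ h ∈ K, Function.Injective (B h)) :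
    ∃ c > 0, ∀ h ∈ K, ∀ g, c * ‖g‖ ≤ ‖B h g‖ := by
  obtain ⟨c, hc, hcK⟩ := (hK.prod (isCompact_sphere (0 : F) 1)).exists_forall_le'
    (a := 0) hB.norm.continuousOn fun x hx => by
      have hx2 : x.2 ≠ 0 := ne_zero_of_mem_unit_sphere ⟨x.2, hx.2⟩
      exact norm_pos_iff.mpr fun h0 => hx2 (hinj x.1 hx.1 (h0.trans (map_zero _).symm))
  refine ⟨c, hc, fun h hh g => ?_⟩
  rcases eq_or_ne g 0 with rfl | hg
  · simp
  have hg' : ‖g‖ ≠ 0 := norm_ne_zero_iff.mpr hg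
  calc c * ‖g‖ ≤ ‖B h (‖g‖⁻¹ • g)‖ * ‖g‖ := by
        gcongr
        exact hcK (h, _) ⟨hh, by simp [norm_smul, hg']⟩
    _ = ‖B h g‖ := by
        rw [map_smul, norm_smul, norm_inv, norm_norm]; field_simp

theorem isProperMap_of_injective (hK : IsCompact K)
    (hB : Continuous fun x : E × F => B x.1 x.2) (hinj : ∀ h ∈ K, Function.Injective (B h)) :
    IsProperMap fun x : K × F => B x.1 x.2 := by
  obtain ⟨c, hc, hcB⟩ := exists_pos_mul_norm_le_norm_of_injective hK hB hinj
  have : CompactSpace K := isCompact_iff_compactSpace.mp hK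
  have hcont : Continuous fun x : K × F => B x.1 x.2 :=
    hB.comp (continuous_subtype_val.prodMap continuous_id)
  refine isProperMap_iff_isCompact_preimage.mpr ⟨hcont, fun L hL => ?_⟩
  obtain ⟨R, hR⟩ := hL.isBounded.subset_closedBall 0
  refine (isCompact_univ.prod (isCompact_closedBall (0 : F) (R / c))).of_isClosed_subset
    (hL.isClosed.preimage hcont) fun x hx => ⟨mem_univ _, ?_⟩
  rw [mem_closedBall_zero_iff, le_div_iff₀' hc]
  exact (hcB x.1 x.1.2 x.2).trans (mem_closedBall_zero_iff.mp (hR hx))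

theorem isClosed_image_of_injective (hK : IsCompact K)
    (hB : Continuous fun x : E × F => B x.1 x.2) (hinj : ∀ h ∈ K, Function.Injective (B h)) :
    IsClosed {p | ∃ h ∈ K, ∃ g, B h g = p} := by
  convert (isProperMap_of_injective hK hB hinj).isClosed_range using 1
  ext p
  simp

end ProperImage

section CoefficientVectors

theorem coeff_toPoly {m : ℕ} (v : Fin m → ℝ) (i : ℕ) :
    (toPoly v).coeff i = if h : i < m then v ⟨i, h⟩ else 0 := by
  simp only [toPoly, finsetSum_coeff, coeff_C_mul_X_pow]
  split_ifs with h
  · rw [Finset.sum_eq_single ⟨i, h⟩ (fun j _ hj => if_neg fun hij => hj (Fin.ext hij.symm))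
      (by simp)]
    simp
  · exact Finset.sum_eq_zero fun j _ => if_neg fun hij : i = j => h (hij ▸ j.isLt)

theorem toPoly_injective {m : ℕ} : Function.Injective (toPoly (m := m)) := fun v w hvw =>
  funext fun i => by simpa [coeff_toPoly] using congr_arg (coeff · i) hvw

@[simp]
theorem toPoly_zero {m : ℕ} : toPoly (0 : Fin m → ℝ) = 0 := by
  simp [toPoly]

theorem toPoly_add {m : ℕ} (v w : Fin m → ℝ) : toPoly (v + w) = toPoly v + toPoly w := by
  simp [toPoly, add_mul, Finset.sum_add_distrib]

theorem toPoly_smul {m : ℕ} (t : ℝ) (v : Fin m → ℝ) : toPoly (t • v) = C t * toPoly v := by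
  simp [toPoly, Finset.mul_sum, mul_assoc]

theorem natDegree_toPoly_le {m : ℕ} (v : Fin (m + 1) → ℝ) : (toPoly v).natDegree ≤ m :=
  natDegree_sum_le_of_forall_le _ _ fun i _ =>
    (natDegree_C_mul_X_pow_le _ _).trans (Nat.lt_succ_iff.mp i.isLt)

theorem toPoly_eq_iff {m : ℕ} {v : Fin (m + 1) → ℝ} {q : ℝ[X]} (hq : q.natDegree ≤ m) :
    toPoly v = q ↔ ∀ i : Fin (m + 1), q.coeff i = v i := by
  refine ⟨fun h i => by simp [← h, coeff_toPoly, i.isLt], fun h => ext fun j => ?_⟩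
  rw [coeff_toPoly]
  split_ifs with hj
  · exact (h _).symm
  · exact (coeff_eq_zero_of_natDegree_lt (by omega)).symm

theorem continuous_coeff_toPoly {m : ℕ} (i : ℕ) :
    Continuous fun v : Fin m → ℝ => (toPoly v).coeff i := by
  simp only [coeff_toPoly]
  split_ifs
  · exact continuous_apply _
  · exact continuous_const

end CoefficientVectors

section CommonDivisor

variable {ι : Type*} (n : ι → ℕ) (d : ℕ)

def Pcd : Set ((k : ι) → Fin (n k + 1) → ℝ) :=
  {p | ∃ h : Fin (d + 1) → ℝ, h ≠ 0 ∧
    ∃ g : (k : ι) → Fin (n k - d + 1) → ℝ, ∀ k, toPoly (p k) = toPoly (g k) * toPoly h}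

noncomputable def mulCoeffs (h : Fin (d + 1) → ℝ) :
    ((k : ι) → Fin (n k - d + 1) → ℝ) →ₗ[ℝ] (k : ι) → Fin (n k + 1) → ℝ where
  toFun g k i := (toPoly (g k) * toPoly h).coeff i
  map_add' g g' := by
    ext k i
    simp [toPoly_add, add_mul]
  map_smul' t g := by
    ext k i
    simp [toPoly_smul, mul_assoc]

variable {n d}

theorem mulCoeffs_eq_iff (hdn : ∀ k, d ≤ n k) {h : Fin (d + 1) → ℝ}
    {g : (k : ι) → Fin (n k - d + 1) → ℝ} {p : (k : ι) → Fin (n k + 1) → ℝ} :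
    mulCoeffs n d h g = p ↔ ∀ k, toPoly (p k) = toPoly (g k) * toPoly h := by
  refine funext_iff.trans (forall_congr' fun k => funext_iff.trans (toPoly_eq_iff ?_).symm)
  exact natDegree_mul_le.trans <| (add_le_add (natDegree_toPoly_le _) (natDegree_toPoly_le h)).trans
    (Nat.sub_add_cancel (hdn k)).le

theorem injective_mulCoeffs (hdn : ∀ k, d ≤ n k) {h : Fin (d + 1) → ℝ} (hh : h ≠ 0) :
    Function.Injective (mulCoeffs n d h) := by
  refine (injective_iff_map_eq_zero _).mpr fun g hg => funext fun k => toPoly_injective ?_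
  have hgh := (mulCoeffs_eq_iff hdn).mp hg k
  rw [Pi.zero_apply, toPoly_zero, eq_comm, mul_eq_zero] at hgh
  exact (hgh.resolve_right (by simpa using toPoly_injective.ne hh)).trans toPoly_zero.symm

theorem continuous_mulCoeffs :
    Continuous fun x : (Fin (d + 1) → ℝ) × ((k : ι) → Fin (n k - d + 1) → ℝ) =>
      mulCoeffs n d x.1 x.2 := by
  refine continuous_pi fun k => continuous_pi fun i => ?_
  simp only [mulCoeffs, LinearMap.coe_mk, AddHom.coe_mk, coeff_mul]
  exact continuous_finsetSum _ fun j _ =>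
    ((continuous_coeff_toPoly j.1).comp ((continuous_apply k).comp continuous_snd)).mul
      ((continuous_coeff_toPoly j.2).comp continuous_fst)

theorem Pcd_eq_image_sphere (hdn : ∀ k, d ≤ n k) :
    Pcd n d =
    {p | ∃ h ∈ Metric.sphere 0 1, ∃ g, mulCoeffs n d h g = p} := by
  ext p
  constructor
  · rintro ⟨h, hh, g, hp⟩
    have hh' : ‖h‖ ≠ 0 := norm_ne_zero_iff.mpr hh
    refine ⟨‖h‖⁻¹ • h, by simp [norm_smul, hh'], ‖h‖ • g, (mulCoeffs_eq_iff hdn).mpr fun k => ?_⟩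
    rw [Pi.smul_apply, toPoly_smul, toPoly_smul, mul_mul_mul_comm, ← C_mul,
      mul_inv_cancel₀ hh', C_1, one_mul, hp]
  · rintro ⟨h, hh, g, rfl⟩
    exact ⟨h, ne_zero_of_mem_unit_sphere ⟨h, hh⟩, g, (mulCoeffs_eq_iff hdn).mp rfl⟩

theorem isClosed_Pcd [Fintype ι] (hdn : ∀ k, d ≤ n k) : IsClosed (Pcd n d) := by
  rw [Pcd_eq_image_sphere hdn]
  exact isClosed_image_of_injective (isCompact_sphere 0 1) continuous_mulCoeffs
    fun h hh => injective_mulCoeffs hdn (ne_zero_of_mem_unit_sphere ⟨h, hh⟩)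

end CommonDivisor

theorem isClosed_Pgcd_general (N : ℕ) (n : Fin (N + 1) → ℕ) (d : ℕ) :
    IsClosed {p : (k : Fin (N + 1)) → Fin (n k + 1) → ℝ |
      ∃ d', d ≤ d' ∧ d' ≤ (⨅ k, n k) ∧
        ∃ h : Fin (d' + 1) → ℝ, h ≠ 0 ∧
          ∃ g : (k : Fin (N + 1)) → Fin (n k - d' + 1) → ℝ,
            ∀ k, toPoly (p k) = toPoly (g k) * toPoly h} := by
  convert (Set.finite_Icc d (⨅ k, n k)).isClosed_biUnion fun d' hd' =>
    isClosed_Pcd fun k => hd'.2.trans (ciInf_le (OrderBot.bddBelow _) k) using 1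
  ext p
  simp [Pcd, and_assoc]

/-- Over `ℝ`, for every `0 ≤ d ≤ n_min`, the set `P^gcd_d` of `N`-tuples of real polynomials
(given by coefficient vectors) having a common divisor of degree at least `d`, i.e. lying in
`P^cd_{d'}` for some `d ≤ d' ≤ n_min`, viewed as a subset of `ℝ^{n_1+1} × ⋯ × ℝ^{n_N+1}`,
is closed. -/
theorem isClosed_Pgcd (N : ℕ) (n : Fin (N + 1) → ℕ) (d : ℕ) (hd : d ≤ ⨅ k, n k) :
    IsClosed {p : (k : Fin (N + 1)) → Fin (n k + 1) → ℝ |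
      ∃ d', d ≤ d' ∧ d' ≤ (⨅ k, n k) ∧
        ∃ h : Fin (d' + 1) → ℝ, h ≠ 0 ∧
          ∃ g : (k : Fin (N + 1)) → Fin (n k - d' + 1) → ℝ,
            ∀ k, toPoly (p k) = toPoly (g k) * toPoly h} :=
  isClosed_Pgcd_general N n d
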